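/- Let u : ℝ^N → ℝ be continuously differentiable, and suppose x_k → z and λ_k → Λ are sequences with x_{k,1} > λ_k, z₁ = Λ, and u(x_k) ≥ u(x_k^{λ_k}) for all k, where x^λ = (2λ − x₁, x'). Then ∂u/∂x₁(z) ≥ 0. -/

import Mathlib

/-!
Reflecting `x` in the hyperplane `{x₁ = λ}` moves it by `-2(x₁ - λ) e₁`, so the hypothesis says that
the difference quotients of `u` in the direction `e₁`, taken between the points `x_k` and their
reflections, are nonnegative. Both points tend to `z` and the step `2(x_{k,1} - λ_k)` is positive and
tends to `0`, so by strict differentiability of the `C¹` function `u` at `z` these quotients tend to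
`∂u/∂x₁(z)`, which is therefore nonnegative.
-/

open Filter Topology Asymptotics

section DifferenceQuotient

variable {E : Type*} [NormedAddCommGroup E] [NormedSpace ℝ E] {u : E → ℝ} {f : E →L[ℝ] ℝ}
  {z v : E} {α : Type*} {l : Filter α} {a b : α → E} {t : α → ℝ}

/-- Unlike ordinary differentiability, strict differentiability controls difference quotients whose
two base points both move towards `z`. -/
theorem HasStrictFDerivAt.tendsto_div_of_sub_eq_smul (hu : HasStrictFDerivAt u f z)
    (ha : Tendsto a l (𝓝 z)) (hb : Tendsto b l (𝓝 z)) (ht : ∀ k, t k ≠ 0)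
    (hab : ∀ k, a k - b k = t k • v) :
    Tendsto (fun k => (u (a k) - u (b k)) / t k) l (𝓝 (f v)) := by
  have hremainder : (fun k => u (a k) - u (b k) - t k * f v) =o[l] t := by
    have h := hu.isLittleO.comp_tendsto (ha.prodMk_nhds hb)
    simp only [Function.comp_def, hab, map_smul, smul_eq_mul] at h
    exact h.trans_isBigO (isBigO_of_le' l fun k => by rw [norm_smul, mul_comm])
  have hquot := hremainder.tendsto_div_nhds_zero.add_const (f v)
  rw [zero_add] at hquot
  refine hquot.congr fun k => ?_
  field_simp [ht k]
  ring

theorem HasStrictFDerivAt.nonneg_apply_of_le_of_sub_eq_smul [l.NeBot]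
    (hu : HasStrictFDerivAt u f z) (ha : Tendsto a l (𝓝 z)) (hb : Tendsto b l (𝓝 z))
    (ht : ∀ k, 0 < t k) (hab : ∀ k, a k - b k = t k • v) (hle : ∀ k, u (b k) ≤ u (a k)) :
    0 ≤ f v :=
  ge_of_tendsto' (hu.tendsto_div_of_sub_eq_smul ha hb (fun k => (ht k).ne') hab) fun k =>
    div_nonneg (sub_nonneg.mpr (hle k)) (ht k).le

end DifferenceQuotient

theorem EuclideanSpace.toLp_update {ι : Type*} [Fintype ι] [DecidableEq ι]
    (x : EuclideanSpace ℝ ι) (i : ι) (c : ℝ) :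
    WithLp.toLp 2 (Function.update x i c) = x - (x i - c) • EuclideanSpace.single i 1 := by
  ext j
  rcases eq_or_ne j i with rfl | hj
  · simp
  · simp [hj]

theorem partial_x1_nonneg_at_limit_of_reflection_comparison {N : ℕ} [NeZero N]
    (u : EuclideanSpace ℝ (Fin N) → ℝ) (hu : ContDiff ℝ 1 u)
    (x : ℕ → EuclideanSpace ℝ (Fin N)) (lam : ℕ → ℝ)
    (z : EuclideanSpace ℝ (Fin N)) (Λ : ℝ)
    (hx : Tendsto x atTop (nhds z)) (hlam : Tendsto lam atTop (nhds Λ))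
    (hgt : ∀ k, x k 0 > lam k) (hz : z 0 = Λ)
    (hcomp : ∀ k, u (x k) ≥ u (WithLp.toLp 2 (Function.update (x k) 0 (2 * lam k - x k 0)))) :
    0 ≤ fderiv ℝ u z (EuclideanSpace.single 0 1) := by
  set e₁ : EuclideanSpace ℝ (Fin N) := EuclideanSpace.single 0 1
  set t : ℕ → ℝ := fun k => 2 * (x k 0 - lam k)
  have hreflect : ∀ k, WithLp.toLp 2 (Function.update (x k) 0 (2 * lam k - x k 0)) =
      x k - t k • e₁ := fun k => by
    rw [EuclideanSpace.toLp_update]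
    congr 2
    ring
  have ht : Tendsto t atTop (𝓝 0) := by
    have hx₁ := ((EuclideanSpace.proj (0 : Fin N)).continuous.tendsto z).comp hx
    simpa [hz] using (hx₁.sub hlam).const_mul 2
  have hreflected : Tendsto (fun k => x k - t k • e₁) atTop (𝓝 z) := by
    simpa using hx.sub (ht.smul_const e₁)
  refine (hu.contDiffAt.hasStrictFDerivAt one_ne_zero).nonneg_apply_of_le_of_sub_eq_smul
    hx hreflected (fun k => by simp only [t]; linarith [hgt k]) (fun k => sub_sub_cancel _ _)
    fun k => ?_
  simpa only [hreflect] using hcomp k
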